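/- Let q ≥ 3 be an odd integer (q = 2r − 1 for an integer r ≥ 2) and let Pₙ be the polynomials defined by P₀(x) = 1, P₁(x) = x, P_{n+1}(x) = ((q+1)/q)·x·Pₙ(x) − (1/q)·P_{n−1}(x). Then for every n ∈ ℕ and every real number x, Pₙ(x) = [ (2/(q+1))·Tₙ( ((q+1)/(2√q))·x ) + ((q−1)/(q+1))·Uₙ( ((q+1)/(2√q))·x ) ]·q^{−n/2}, where Tₙ and Uₙ are the Chebyshev polynomials of the first and second kind. -/

import Mathlib

/-! With `q = s²`, the rescaled sequence `sⁿ Pₙ(x)` satisfies the Chebyshev recurrence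
`gₙ₊₂ = 2y gₙ₊₁ - gₙ` in the variable `y = (s² + 1)/(2s) · x`, and so does every combination
`a Tₙ(y) + b Uₙ(y)`. The coefficients `a = 2/(s² + 1)`, `b = (s² - 1)/(s² + 1)` are the ones
matching the initial values `g₀ = 1` and `g₁ = s x`. -/

noncomputable section

open Polynomial Polynomial.Chebyshev

def P (q : ℝ) : ℕ → ℝ → ℝ
  | 0 => fun _ => 1
  | 1 => fun s => s
  | (n + 2) => fun s => ((q + 1) / q) * s * P q (n + 1) s - (1 / q) * P q n s

theorem chebyshev_combination_eval_add_two {R : Type*} [CommRing R] (a b y : R) (n : ℕ) :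
    a * (T R (n + 2 : ℕ)).eval y + b * (U R (n + 2 : ℕ)).eval y =
      2 * y * (a * (T R (n + 1 : ℕ)).eval y + b * (U R (n + 1 : ℕ)).eval y) -
        (a * (T R n).eval y + b * (U R n).eval y) := by
  push_cast
  simp only [T_add_two, U_add_two, eval_sub, eval_mul, eval_X, eval_ofNat]
  ring

theorem P_sq_eq_chebyshev {s : ℝ} (hs : s ≠ 0) (n : ℕ) (x : ℝ) :
    P (s ^ 2) n x =
      (2 / (s ^ 2 + 1) * (T ℝ n).eval ((s ^ 2 + 1) / (2 * s) * x) +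
        (s ^ 2 - 1) / (s ^ 2 + 1) * (U ℝ n).eval ((s ^ 2 + 1) / (2 * s) * x)) * s⁻¹ ^ n := by
  have hs2 : s ^ 2 + 1 ≠ 0 := by positivity
  induction n using Nat.twoStepInduction with
  | zero =>
    simp only [P, Nat.cast_zero, T_zero, U_zero, eval_one, pow_zero]
    field_simp
    ring
  | one =>
    simp only [P, Nat.cast_one, T_one, U_one, eval_X, eval_mul, eval_ofNat, pow_one]
    field_simp
    ring
  | more n ih₀ ih₁ =>
    rw [chebyshev_combination_eval_add_two]
    change (s ^ 2 + 1) / s ^ 2 * x * P (s ^ 2) (n + 1) x - 1 / s ^ 2 * P (s ^ 2) n x = _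
    rw [ih₀, ih₁, inv_pow, inv_pow, inv_pow]
    field_simp
    ring

theorem rpow_neg_natCast_div_two_eq_inv_sqrt_pow {q : ℝ} (hq : 0 ≤ q) (n : ℕ) :
    q ^ (-(n : ℝ) / 2) = (Real.sqrt q)⁻¹ ^ n := by
  rw [Real.sqrt_eq_rpow, ← Real.rpow_neg hq, ← Real.rpow_natCast, ← Real.rpow_mul hq]
  ring_nf

theorem P_eq_chebyshev_general (q : ℕ) (hq3 : 3 ≤ q) (n : ℕ) (x : ℝ) :
    P (q : ℝ) n x =
      (2 / ((q : ℝ) + 1) *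
          (Polynomial.Chebyshev.T ℝ n).eval (((q : ℝ) + 1) / (2 * Real.sqrt q) * x) +
        ((q : ℝ) - 1) / ((q : ℝ) + 1) *
          (Polynomial.Chebyshev.U ℝ n).eval (((q : ℝ) + 1) / (2 * Real.sqrt q) * x)) *
        (q : ℝ) ^ (-(n : ℝ) / 2) := by
  have hq : (0 : ℝ) < q := Nat.cast_pos.mpr (by omega)
  have hsq : (q : ℝ) = Real.sqrt q ^ 2 := (Real.sq_sqrt hq.le).symm
  rw [rpow_neg_natCast_div_two_eq_inv_sqrt_pow hq.le, hsq, Real.sqrt_sq (Real.sqrt_nonneg _)]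
  exact P_sq_eq_chebyshev (Real.sqrt_pos.mpr hq).ne' n x

theorem P_eq_chebyshev (q : ℕ) (hq3 : 3 ≤ q) (hqodd : Odd q) (n : ℕ) (x : ℝ) :
    P (q : ℝ) n x =
      (2 / ((q : ℝ) + 1) *
          (Polynomial.Chebyshev.T ℝ n).eval (((q : ℝ) + 1) / (2 * Real.sqrt q) * x) +
        ((q : ℝ) - 1) / ((q : ℝ) + 1) *
          (Polynomial.Chebyshev.U ℝ n).eval (((q : ℝ) + 1) / (2 * Real.sqrt q) * x)) *
        (q : ℝ) ^ (-(n : ℝ) / 2) :=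
  P_eq_chebyshev_general q hq3 n x
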